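/- Let m be the Motzkin generating function satisfying m = 1 + z·m + z²·m², and let m̃ = 1 + z·m. Then m̃ = 1 + z·(1 - m̃ + m̃²), and h = z·m̃ is pseudo-involutory with B-function B_h = C, the Catalan generating function. -/

import Mathlib

/-!
With `h = z·m̃`, the defining equation of `m` becomes `h = z + z² - z·h + h²`, a relation
between `h` and `z` that is invariant under `(h, z) ↦ (-z, -h)`. Substituting `-z`, then
`-h(-z)` or `h`, into it shows that `h(-h(-z))` and `-h(-z) ∘ h` satisfy the same relation as `z`.
A quadratic equation has at most one root with zero constant term when the sum of its two roots
has nonzero constant term, which forces both composites to equal `z`. In the same way `h - z`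
and `z h·C(z h)` are both the root with zero constant term of `t = z h + t²`.
-/

open PowerSeries

/-- Composition `f ∘ g` of formal power series (meaningful when the constant
coefficient of `g` is zero). -/
noncomputable def comp (f g : PowerSeries ℚ) : PowerSeries ℚ :=
  PowerSeries.mk fun n =>
    ∑ i ∈ Finset.range (n + 1), (PowerSeries.coeff (R := ℚ) i f) * (PowerSeries.coeff (R := ℚ) n (g ^ i))

/-- A formal power series `f` is pseudo-involutory when its compositional
inverse is `-f(-z)`. -/
def PseudoInvolutory (f : PowerSeries ℚ) : Prop :=
  comp f (-(comp f (-X))) = X ∧ comp (-(comp f (-X))) f = X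

lemma coeff_pow_eq_zero_of_lt {R : Type*} [CommRing R] {g : R⟦X⟧} (hg : constantCoeff g = 0)
    {n d : ℕ} (h : n < d) : coeff n (g ^ d) = 0 :=
  coeff_of_lt_order n <| (Nat.cast_lt.mpr h).trans_le (le_order_pow_of_constantCoeff_eq_zero d hg)

lemma comp_eq_subst {g : ℚ⟦X⟧} (hg : constantCoeff g = 0) (f : ℚ⟦X⟧) :
    comp f g = f.subst g := by
  ext n
  rw [comp, coeff_mk, coeff_subst' (HasSubst.of_constantCoeff_zero' hg),
    finsum_eq_finsetSum_of_support_subset _ (s := Finset.range (n + 1))]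
  · rfl
  · intro d hd
    by_contra hdn
    simp only [Finset.coe_range, Set.mem_Iio, not_lt] at hdn
    exact hd <| by simp only [coeff_pow_eq_zero_of_lt hg (by omega : n < d), smul_zero]

noncomputable def compRingHom {g : ℚ⟦X⟧} (hg : constantCoeff g = 0) :
    ℚ⟦X⟧ →+* ℚ⟦X⟧ :=
  (substAlgHom (HasSubst.of_constantCoeff_zero' hg)).toRingHom

@[simp]
lemma compRingHom_apply {g : ℚ⟦X⟧} (hg : constantCoeff g = 0) (f : ℚ⟦X⟧) :
    compRingHom hg f = comp f g := by
  rw [comp_eq_subst hg]; exact congrFun (coe_substAlgHom _) f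

lemma comp_X {g : ℚ⟦X⟧} (hg : constantCoeff g = 0) : comp X g = g := by
  rw [comp_eq_subst hg, subst_X (HasSubst.of_constantCoeff_zero' hg)]

@[simp]
lemma constantCoeff_comp (f g : ℚ⟦X⟧) : constantCoeff (comp f g) = constantCoeff f := by
  rw [← coeff_zero_eq_constantCoeff_apply, ← coeff_zero_eq_constantCoeff_apply, comp, coeff_mk]
  simp

section CommRing

variable {R : Type*} [CommRing R]

lemma eq_of_sub_mul_eq_zero {x y u : R⟦X⟧} (h : (x - y) * u = 0) (hu : constantCoeff u = 1) :
    x = y :=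
  sub_eq_zero.mp ((isUnit_iff_constantCoeff.mpr (hu ▸ isUnit_one)).mul_left_eq_zero.mp h)

lemma eq_of_eq_add_sq {c s t : R⟦X⟧} (hs : s = c + s ^ 2) (ht : t = c + t ^ 2)
    (hs0 : constantCoeff s = 0) (ht0 : constantCoeff t = 0) : s = t :=
  eq_of_sub_mul_eq_zero (u := 1 - s - t) (by linear_combination hs - ht) (by simp [hs0, ht0])

/-- `h = z·m̃` satisfies `MotzkinRel h z`. The relation is invariant under `(a, b) ↦ (-b, -a)`,
which is the source of pseudo-involution. -/
def MotzkinRel (a b : R) : Prop := a = b + b ^ 2 - b * a + a ^ 2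

lemma MotzkinRel.neg_swap {a b : R} (h : MotzkinRel a b) : MotzkinRel (-b) (-a) := by
  unfold MotzkinRel at *
  linear_combination h

lemma MotzkinRel.map {S : Type*} [CommRing S] (φ : R →+* S) {a b : R} (h : MotzkinRel a b) :
    MotzkinRel (φ a) (φ b) := by
  unfold MotzkinRel at *
  simpa using congrArg φ h

lemma MotzkinRel.left_unique {a a' c : R⟦X⟧} (h : MotzkinRel a c) (h' : MotzkinRel a' c)
    (ha : constantCoeff a = 0) (ha' : constantCoeff a' = 0) (hc : constantCoeff c = 0) :
    a = a' := by
  unfold MotzkinRel at *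
  exact eq_of_sub_mul_eq_zero (u := 1 - a - a' + c) (by linear_combination h - h')
    (by simp [ha, ha', hc])

lemma MotzkinRel.right_unique {a c c' : R⟦X⟧} (h : MotzkinRel a c) (h' : MotzkinRel a c')
    (ha : constantCoeff a = 0) (hc : constantCoeff c = 0) (hc' : constantCoeff c' = 0) :
    c = c' :=
  neg_injective <| h.neg_swap.left_unique h'.neg_swap (by simp [hc]) (by simp [hc']) (by simp [ha])

end CommRing

lemma eq_mul_comp_of_eq_add_sq {Cat c t : ℚ⟦X⟧} (hCat : Cat = 1 + X * Cat ^ 2)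
    (hc : constantCoeff c = 0) (ht : t = c + t ^ 2) (ht0 : constantCoeff t = 0) :
    t = c * comp Cat c := by
  have hD := congrArg (compRingHom hc) hCat
  simp only [map_add, map_mul, map_pow, map_one, compRingHom_apply, comp_X hc] at hD
  exact eq_of_eq_add_sq ht (by linear_combination c * hD) ht0 (by simp [hc])

lemma MotzkinRel.comp {a b g : ℚ⟦X⟧} (hg : constantCoeff g = 0) (h : MotzkinRel a b) :
    MotzkinRel (comp a g) (comp b g) := by
  simpa using h.map (compRingHom hg)

lemma pseudoInvolutory_of_motzkinRel {h : ℚ⟦X⟧} (hrel : MotzkinRel h X)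
    (h0 : constantCoeff h = 0) : PseudoInvolutory h := by
  set u := comp h (-X)
  show comp h (-u) = X ∧ comp (-u) h = X
  have hu0 : constantCoeff u = 0 := by simp [u, h0]
  have hu : MotzkinRel X (-u) := by
    simpa [u, comp_X (g := -X) (by simp)] using (hrel.comp (g := -X) (by simp)).neg_swap
  constructor
  · have hv := hrel.comp (g := -u) (by simp [hu0])
    rw [comp_X (by simp [hu0])] at hv
    exact hv.left_unique hu (by simp [h0]) (by simp) (by simp [hu0])
  · have hw := hu.comp h0
    rw [comp_X h0] at hw
    exact (hrel.right_unique hw h0 (by simp) (by simp [hu0])).symm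

/-- For the Motzkin generating function `m = 1 + z·m + z²·m²` and
`m̃ = 1 + z·m`, we have `m̃ = 1 + z·(1 - m̃ + m̃²)`, and `h = z·m̃` is
pseudo-involutory with `B`-function the Catalan series `C`. -/
theorem motzkin_planted_B (m Cat : PowerSeries ℚ)
    (hm : m = 1 + X * m + X ^ 2 * m ^ 2)
    (hCat : Cat = 1 + X * Cat ^ 2) :
    (1 + X * m) = 1 + X * (1 - (1 + X * m) + (1 + X * m) ^ 2) ∧
      PseudoInvolutory (X * (1 + X * m)) ∧
      (X * (1 + X * m)) - X =
        X * (X * (1 + X * m)) * comp Cat (X * (X * (1 + X * m))) := by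
  have hrel : MotzkinRel (X * (1 + X * m)) X := by
    unfold MotzkinRel
    linear_combination X ^ 2 * hm
  have h0 : constantCoeff (X * (1 + X * m)) = 0 := by simp
  refine ⟨by linear_combination X * hm, pseudoInvolutory_of_motzkinRel hrel h0, ?_⟩
  refine eq_mul_comp_of_eq_add_sq hCat (by simp) ?_ (by simp [h0])
  unfold MotzkinRel at hrel
  linear_combination hrel
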